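/- arXiv:math/0411452 — 3 statements merged into one kernel-verified Lean document; each statement's English description precedes it below -/
import Mathlib

section
/- The symplectic graph Sp(2ν,q) is a strongly regular graph with parameters ((q^{2ν}-1)/(q-1), q^{2ν-1}, q^{2ν-2}(q-1), q^{2ν-2}(q-1)): it has (q^{2ν}-1)/(q-1) vertices, every vertex has degree q^{2ν-1}, any two distinct adjacent vertices have exactly q^{2ν-2}(q-1) common neighbors, and any two distinct non-adjacent vertices have exactly q^{2ν-2}(q-1) common neighbors. -/
/-!
The form `B(α, β) = α K βᵀ` is alternating and nondegenerate, so `[α] ~ [β]` iff the linear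
functional `B(α, ·)` does not vanish at `β`, and distinct points give linearly independent
functionals. For `m` independent functionals on `F^n` the map `F^n → F^m` they define is
surjective with fibres of size `q^(n-m)`, so `(q-1)^m q^(n-m)` vectors lie outside all `m`
kernels. Dividing by the `q-1` nonzero scalars gives `q^(2ν-1)` neighbours of a point (`m = 1`)
and `(q-1) q^(2ν-2)` common neighbours of two distinct points (`m = 2`), adjacent or not.
-/

open Matrix

/-- The standard nonsingular alternate matrix over `F` with `ν` diagonal blocks
`[[0,1],[-1,0]]`. -/
def sK (F : Type) [Field F] (ν : ℕ) : Matrix (Fin (2 * ν)) (Fin (2 * ν)) F :=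
  Matrix.of fun i j =>
    if i.val % 2 = 0 ∧ j.val = i.val + 1 then (1 : F)
    else if j.val % 2 = 0 ∧ i.val = j.val + 1 then (-1 : F) else 0

/-- The symplectic graph `Sp(2ν, q)`: vertices are the one-dimensional subspaces
of `F^(2ν)`, with `[α]` adjacent to `[β]` iff `α K βᵀ ≠ 0`. -/
def SpG (F : Type) [Field F] (ν : ℕ) :
    SimpleGraph (Projectivization F (Fin (2 * ν) → F)) :=
  SimpleGraph.fromRel fun x y => x.rep ⬝ᵥ ((sK F ν) *ᵥ y.rep) ≠ 0

open Finset Function Projectivization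
open scoped LinearAlgebra.Projectivization

theorem AddMonoidHom.card_filter_mem_mul_card_of_surjective {G H : Type*} [AddGroup G]
    [Fintype G] [AddGroup H] [Fintype H] [DecidableEq H] (f : G →+ H) (hf : Surjective f)
    (S : Finset H) : #{g | f g ∈ S} * Fintype.card H = #S * Fintype.card G := by
  have hfiber : ∀ T : Finset H, #{g | f g ∈ T} = #T * #{g | f g = 0} := fun T => by
    rw [card_eq_sum_card_fiberwise (f := f) (t := T) (fun g hg => by simpa using hg),
      ← smul_eq_mul, ← sum_const]
    refine sum_congr rfl fun y hy => ?_
    rw [filter_filter, ← card_fiber_eq_of_mem_range f (hf y) (hf 0)]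
    congr 1
    ext g
    simp only [mem_filter, mem_univ, true_and, and_iff_right_iff_imp]
    rintro rfl
    exact hy
  have huniv := hfiber univ
  simp only [mem_univ, filter_true, card_univ] at huniv
  rw [hfiber, huniv]
  ring

theorem Matrix.mulVecLin_surjective_of_linearIndependent {K m n : Type*} [Field K] [Fintype m]
    [Fintype n] {M : Matrix m n K} (hM : LinearIndependent K M.row) :
    Surjective M.mulVecLin := by
  rw [← LinearMap.range_eq_top]
  apply Submodule.eq_top_of_finrank_eq
  rw [← rank, hM.rank_matrix, Module.finrank_fintype_fun_eq_card]

theorem Matrix.dotProduct_mulVec_self_eq_zero {R n : Type*} [CommRing R] [Fintype n]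
    {A : Matrix n n R} (hA : Aᵀ = -A) (hdiag : ∀ i, A i i = 0) (v : n → R) :
    v ⬝ᵥ (A *ᵥ v) = 0 := by
  have hskew : ∀ i j, A j i = -A i j := fun i j => by
    simpa using congrFun (congrFun hA i) j
  simp only [dotProduct, mulVec, mul_sum, ← sum_product']
  refine sum_involution (fun p _ => p.swap) (fun p _ => ?_) (fun p _ h => ?_)
    (fun p _ => mem_univ _) (fun p _ => rfl)
  · simp only [Prod.fst_swap, Prod.snd_swap, hskew p.1 p.2]
    ring
  · rintro hp
    obtain ⟨i, j⟩ := p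
    obtain rfl : i = j := (Prod.ext_iff.mp hp).2
    simp [hdiag] at h

theorem Projectivization.card_setOf_rep_mul {F V : Type*} [Field F] [AddCommGroup V]
    [Module F V] (P : V → Prop) (hP : ∀ (c : Fˣ) (v : V), P (c • v) ↔ P v) :
    Nat.card {x : ℙ F V // P x.rep} * (Nat.card F - 1) = Nat.card {v : V // v ≠ 0 ∧ P v} := by
  have hrep : ∀ v : {v : V // v ≠ 0}, P (mk F v.1 v.2).rep ↔ P v := fun v => by
    obtain ⟨c, hc⟩ := exists_smul_eq_mk_rep F v.1 v.2
    rw [← hc, hP]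
  rw [← Nat.card_units, ← Nat.card_prod, Nat.card_congr
    ((Equiv.subtypeSubtypeEquivSubtypeInter (· ≠ 0) P).symm.trans
      (((nonZeroEquivProjectivizationProdUnits F V).subtypeEquiv (q := fun p => P p.1.rep)
        fun v => (hrep v).symm).trans
          (Equiv.prodSubtypeFstEquivSubtypeProd (p := fun x : ℙ F V => P x.rep))))]

section Counting
variable {F ι κ : Type*} [Field F] [Fintype F] [Fintype ι] [Fintype κ]

theorem card_forall_dotProduct_ne_zero {w : κ → ι → F} (hw : LinearIndependent F w) :
    Nat.card {v : ι → F // ∀ k, w k ⬝ᵥ v ≠ 0} =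
      (Fintype.card F - 1) ^ Fintype.card κ *
        Fintype.card F ^ (Fintype.card ι - Fintype.card κ) := by
  classical
  have key := AddMonoidHom.card_filter_mem_mul_card_of_surjective
    (of w).mulVecLin.toAddMonoidHom (mulVecLin_surjective_of_linearIndependent hw)
    (Fintype.piFinset fun _ => univ.filter (· ≠ 0))
  have hcount : #{v | (of w).mulVecLin.toAddMonoidHom v ∈
      Fintype.piFinset fun _ => univ.filter (· ≠ 0)} =
        Nat.card {v : ι → F // ∀ k, w k ⬝ᵥ v ≠ 0} := by
    rw [Nat.card_eq_fintype_card, Fintype.card_subtype]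
    simp [mulVec, Fintype.mem_piFinset]
  have hκι : Fintype.card κ ≤ Fintype.card ι := by
    simpa using hw.fintype_card_le_finrank
  rw [hcount, Fintype.card_piFinset, prod_const, card_univ, filter_ne',
    card_erase_of_mem (mem_univ _), card_univ, Fintype.card_fun, Fintype.card_fun] at key
  refine Nat.eq_of_mul_eq_mul_right (pow_pos (Fintype.card_pos (α := F)) (Fintype.card κ)) ?_
  rw [key, mul_assoc, ← pow_add, Nat.sub_add_cancel hκι]

theorem Projectivization.card_setOf_forall_dotProduct_rep_ne_zero [Nonempty κ]
    {w : κ → ι → F} (hw : LinearIndependent F w) :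
    Nat.card {x : ℙ F (ι → F) // ∀ k, w k ⬝ᵥ x.rep ≠ 0} =
      (Fintype.card F - 1) ^ (Fintype.card κ - 1) *
        Fintype.card F ^ (Fintype.card ι - Fintype.card κ) := by
  have hscale : ∀ (c : Fˣ) (v : ι → F), (∀ k, w k ⬝ᵥ (c • v) ≠ 0) ↔ ∀ k, w k ⬝ᵥ v ≠ 0 :=
    fun c v => by simp [dotProduct_smul, Units.smul_def]
  have hne : ∀ v : ι → F, (v ≠ 0 ∧ ∀ k, w k ⬝ᵥ v ≠ 0) ↔ ∀ k, w k ⬝ᵥ v ≠ 0 := fun v =>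
    and_iff_right_of_imp fun h hv => h (Classical.arbitrary κ) (hv ▸ dotProduct_zero _)
  have key := card_setOf_rep_mul (fun v => ∀ k, w k ⬝ᵥ v ≠ 0) hscale
  rw [Nat.card_congr (Equiv.subtypeEquivRight hne), card_forall_dotProduct_ne_zero hw,
    Nat.card_eq_fintype_card (α := F)] at key
  have hq : 0 < Fintype.card F - 1 := Nat.sub_pos_of_lt Fintype.one_lt_card
  refine Nat.eq_of_mul_eq_mul_right hq ?_
  rw [key, mul_right_comm, ← pow_succ, Nat.sub_add_cancel Fintype.card_pos]

end Counting

section Symplectic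
variable {F : Type} [Field F] {ν : ℕ}

theorem sK_transpose : (sK F ν)ᵀ = -sK F ν := by
  ext i j
  simp only [transpose_apply, sK, neg_of, of_apply, Pi.neg_apply]
  split_ifs <;> first | omega | simp

theorem sK_apply_self (i : Fin (2 * ν)) : sK F ν i i = 0 := by
  simp [sK]

-- For `j` the partner of `i` (`i xor 1`), column `j` of `sK` has its only nonzero entry in row `i`.
theorem vecMul_sK_injective : Injective (· ᵥ* sK F ν) := by
  refine (injective_iff_map_eq_zero (vecMulLinear (sK F ν))).mpr fun α h => funext fun i => ?_
  have hi := i.isLt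
  let j : Fin (2 * ν) := ⟨if i.val % 2 = 0 then i.val + 1 else i.val - 1, by split_ifs <;> omega⟩
  have hj := congrFun h j
  rw [vecMulLinear_apply, vecMul, dotProduct, sum_eq_single i] at hj
  · simp only [sK, of_apply, j] at hj
    split_ifs at hj <;> first | omega | simpa using hj
  · intro k _ hki
    have : k.val ≠ i.val := Fin.val_ne_of_ne hki
    simp only [sK, of_apply, j]
    split_ifs <;> first | omega | simp
  · simp

theorem SpG_adj_iff (x y : ℙ F (Fin (2 * ν) → F)) :
    (SpG F ν).Adj x y ↔ (x.rep ᵥ* sK F ν) ⬝ᵥ y.rep ≠ 0 := by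
  have hswap : y.rep ⬝ᵥ (sK F ν *ᵥ x.rep) = -(x.rep ⬝ᵥ (sK F ν *ᵥ y.rep)) := by
    rw [dotProduct_mulVec, ← mulVec_transpose, sK_transpose, neg_mulVec, neg_dotProduct,
      dotProduct_comm]
  rw [SpG, SimpleGraph.fromRel_adj, hswap, neg_ne_zero, or_self, ← dotProduct_mulVec,
    and_iff_right_iff_imp]
  rintro h rfl
  exact h (dotProduct_mulVec_self_eq_zero sK_transpose sK_apply_self _)

theorem SpG_ncard_setOf_forall_adj [Fintype F] {κ : Type*} [Fintype κ] [Nonempty κ]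
    {p : κ → ℙ F (Fin (2 * ν) → F)} (hp : Independent p) :
    {z | ∀ k, (SpG F ν).Adj (p k) z}.ncard =
      (Fintype.card F - 1) ^ (Fintype.card κ - 1) * Fintype.card F ^ (2 * ν - Fintype.card κ) := by
  have hw : LinearIndependent F fun k => (p k).rep ᵥ* sK F ν :=
    (independent_iff.mp hp).map' (vecMulLinear (sK F ν))
      (LinearMap.ker_eq_bot.mpr vecMul_sK_injective)
  simp_rw [← Nat.card_coe_set_eq, SpG_adj_iff]
  exact (card_setOf_forall_dotProduct_rep_ne_zero hw).trans (by rw [Fintype.card_fin])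

theorem SpG_ncard_neighborSet [Fintype F] (x : ℙ F (Fin (2 * ν) → F)) :
    ((SpG F ν).neighborSet x).ncard = Fintype.card F ^ (2 * ν - 1) := by
  have hx : Independent ![x] := independent_iff.mpr (linearIndependent_unique_iff.mpr (by
    simpa using x.rep_nonzero))
  have h := SpG_ncard_setOf_forall_adj hx
  simp only [Fin.forall_fin_one, Fintype.card_unique, Nat.sub_self, pow_zero, one_mul] at h
  exact h

theorem SpG_ncard_neighborSet_inter [Fintype F] {x y : ℙ F (Fin (2 * ν) → F)} (hxy : x ≠ y) :
    ((SpG F ν).neighborSet x ∩ (SpG F ν).neighborSet y).ncard =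
      Fintype.card F ^ (2 * ν - 2) * (Fintype.card F - 1) := by
  have h := SpG_ncard_setOf_forall_adj ((independent_pair_iff_ne x y).mpr hxy)
  simp only [Fin.forall_fin_two, Fintype.card_fin] at h
  exact h.trans (by simp [mul_comm])

end Symplectic

theorem SpG_strongly_regular_general (q ν : ℕ) (F : Type) [Field F] [Fintype F]
    (hF : Fintype.card F = q) :
    Nat.card (Projectivization F (Fin (2 * ν) → F)) = (q ^ (2 * ν) - 1) / (q - 1) ∧
    (∀ x : Projectivization F (Fin (2 * ν) → F),
      ((SpG F ν).neighborSet x).ncard = q ^ (2 * ν - 1)) ∧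
    (∀ x y : Projectivization F (Fin (2 * ν) → F), (SpG F ν).Adj x y →
      ((SpG F ν).neighborSet x ∩ (SpG F ν).neighborSet y).ncard
        = q ^ (2 * ν - 2) * (q - 1)) ∧
    (∀ x y : Projectivization F (Fin (2 * ν) → F), x ≠ y → ¬ (SpG F ν).Adj x y →
      ((SpG F ν).neighborSet x ∩ (SpG F ν).neighborSet y).ncard
        = q ^ (2 * ν - 2) * (q - 1)) := by
  subst hF
  refine ⟨?_, SpG_ncard_neighborSet, fun x y hxy => SpG_ncard_neighborSet_inter hxy.ne,
    fun x y hxy _ => SpG_ncard_neighborSet_inter hxy⟩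
  simp [card'', Nat.card_eq_fintype_card]

theorem SpG_strongly_regular (q ν : ℕ) (F : Type) [Field F] [Fintype F]
    (hF : Fintype.card F = q) (hν : 1 ≤ ν) :
    Nat.card (Projectivization F (Fin (2 * ν) → F)) = (q ^ (2 * ν) - 1) / (q - 1) ∧
    (∀ x : Projectivization F (Fin (2 * ν) → F),
      ((SpG F ν).neighborSet x).ncard = q ^ (2 * ν - 1)) ∧
    (∀ x y : Projectivization F (Fin (2 * ν) → F), (SpG F ν).Adj x y →
      ((SpG F ν).neighborSet x ∩ (SpG F ν).neighborSet y).ncard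
        = q ^ (2 * ν - 2) * (q - 1)) ∧
    (∀ x y : Projectivization F (Fin (2 * ν) → F), x ≠ y → ¬ (SpG F ν).Adj x y →
      ((SpG F ν).neighborSet x ∩ (SpG F ν).neighborSet y).ncard
        = q ^ (2 * ν - 2) * (q - 1)) :=
  SpG_strongly_regular_general q ν F hF
end

section
/- The symplectic graph Sp(2ν,q) is vertex transitive: for any two vertices [α] and [β] there exists a graph automorphism of Sp(2ν,q) taking [α] to [β]. -/
open Matrix

/-!
For an alternating form `B`, the transvection `x ↦ x + c • B x w • w` preserves `B`, and with
`w = v - u`, `c = (B u v)⁻¹` it sends `u` to `v` whenever `B u v ≠ 0`. If `B` is nondegenerate,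
two nonzero vectors `u`, `v` have a common non-orthogonal vector `z` (a vector space is not the
union of two proper hyperplanes), so two transvections carry `u` to `z` to `v`. Isometries act on
`ℙ(V)` as automorphisms of the non-orthogonality graph, and `Sp(2ν, q)` is that graph for the
form `α K βᵀ`, which is alternating since `K = A - Aᵀ` and nondegenerate since `K` is a signed
permutation matrix.
-/

open scoped LinearAlgebra.Projectivization

theorem LinearMap.exists_apply_ne_zero_and_apply_ne_zero {R M N P : Type*} [Semiring R]
    [AddCommMonoid M] [Module R M] [AddCommMonoid N] [Module R N] [AddCommMonoid P] [Module R P]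
    {f : M →ₗ[R] N} {g : M →ₗ[R] P} (hf : f ≠ 0) (hg : g ≠ 0) :
    ∃ z, f z ≠ 0 ∧ g z ≠ 0 := by
  obtain ⟨a, ha⟩ := DFunLike.ne_iff.mp hf
  obtain ⟨b, hb⟩ := DFunLike.ne_iff.mp hg
  by_cases hga : g a = 0
  · by_cases hfb : f b = 0
    · exact ⟨a + b, by simpa [hfb], by simpa [hga]⟩
    · exact ⟨b, hfb, hb⟩
  · exact ⟨a, ha, hga⟩

namespace LinearMap.BilinForm

variable {K V : Type*} [Field K] [AddCommGroup V] [Module K V] (B : LinearMap.BilinForm K V)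

def nonorthoGraph : SimpleGraph (ℙ K V) :=
  SimpleGraph.fromRel fun x y => B x.rep y.rep ≠ 0

theorem apply_rep_mk_eq_zero_iff {u v : V} (hu : u ≠ 0) (hv : v ≠ 0) :
    B (Projectivization.mk K u hu).rep (Projectivization.mk K v hv).rep = 0 ↔ B u v = 0 := by
  obtain ⟨a, ha⟩ := Projectivization.exists_smul_eq_mk_rep K u hu
  obtain ⟨b, hb⟩ := Projectivization.exists_smul_eq_mk_rep K v hv
  simp [← ha, ← hb, Units.smul_def]

theorem nonorthoGraph_adj_mk {u v : V} (hu : u ≠ 0) (hv : v ≠ 0) :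
    (nonorthoGraph B).Adj (.mk K u hu) (.mk K v hv) ↔
      Projectivization.mk K u hu ≠ .mk K v hv ∧ (B u v ≠ 0 ∨ B v u ≠ 0) := by
  simp only [nonorthoGraph, SimpleGraph.fromRel_adj, ne_eq, apply_rep_mk_eq_zero_iff]

def nonorthoGraphIso (T : V ≃ₗ[K] V) (hT : ∀ u v, B (T u) (T v) = B u v) :
    nonorthoGraph B ≃g nonorthoGraph B where
  toEquiv := MulAction.toPerm T
  map_rel_iff' {x y} := by
    induction x using Projectivization.ind with | h u hu =>
    induction y using Projectivization.ind with | h v hv =>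
    have hne := (smul_left_cancel_iff T (x := Projectivization.mk K u hu)
      (y := Projectivization.mk K v hv)).not
    simp only [Projectivization.smul_mk, LinearEquiv.smul_def] at hne
    simp [nonorthoGraph_adj_mk, hT, hne]

theorem nonorthoGraphIso_mk (T : V ≃ₗ[K] V) (hT : ∀ u v, B (T u) (T v) = B u v) {u : V}
    (hu : u ≠ 0) :
    nonorthoGraphIso B T hT (.mk K u hu) = .mk K (T u) (T.map_ne_zero_iff.mpr hu) := rfl

variable {B}

def symplecticTransvection (hB : B.IsAlt) (c : K) (w : V) : V ≃ₗ[K] V :=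
  LinearEquiv.transvection (f := c • B.flip w) (v := w) (by simp [hB.self_eq_zero])

theorem symplecticTransvection_apply (hB : B.IsAlt) (c : K) (w x : V) :
    symplecticTransvection hB c w x = x + (c * B x w) • w := rfl

theorem apply_symplecticTransvection (hB : B.IsAlt) (c : K) (w x y : V) :
    B (symplecticTransvection hB c w x) (symplecticTransvection hB c w y) = B x y := by
  simp only [symplecticTransvection_apply, map_add, map_smul, LinearMap.add_apply,
    LinearMap.smul_apply, hB.self_eq_zero, smul_eq_mul, ← LinearMap.IsAlt.neg hB y w]
  ring

theorem symplecticTransvection_apply_self_eq (hB : B.IsAlt) {u v : V} (h : B u v ≠ 0) :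
    symplecticTransvection hB (B u v)⁻¹ (v - u) u = v := by
  simp [symplecticTransvection_apply, hB.self_eq_zero, h]

theorem exists_isometry_apply_eq (hB : B.IsAlt) (hsep : B.SeparatingLeft) {u v : V}
    (hu : u ≠ 0) (hv : v ≠ 0) :
    ∃ T : V ≃ₗ[K] V, (∀ x y, B (T x) (T y) = B x y) ∧ T u = v := by
  have hBu : B u ≠ 0 := fun h => hu (hsep u fun y => by simp [h])
  have hBv : B v ≠ 0 := fun h => hv (hsep v fun y => by simp [h])
  obtain ⟨z, huz, hvz⟩ := LinearMap.exists_apply_ne_zero_and_apply_ne_zero hBu hBv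
  have hzv : B z v ≠ 0 := by rwa [Ne, LinearMap.IsAlt.eq_iff hB]
  refine ⟨(symplecticTransvection hB (B u z)⁻¹ (z - u)).trans
    (symplecticTransvection hB (B z v)⁻¹ (v - z)), fun x y => ?_, ?_⟩
  · simp only [LinearEquiv.trans_apply, apply_symplecticTransvection]
  · simp only [LinearEquiv.trans_apply, symplecticTransvection_apply_self_eq hB huz,
      symplecticTransvection_apply_self_eq hB hzv]

theorem nonorthoGraph_exists_iso_apply_eq (hB : B.IsAlt) (hsep : B.SeparatingLeft)
    (x y : ℙ K V) : ∃ g : nonorthoGraph B ≃g nonorthoGraph B, g x = y := by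
  induction x using Projectivization.ind with | h u hu =>
  induction y using Projectivization.ind with | h v hv =>
  obtain ⟨T, hT, rfl⟩ := exists_isometry_apply_eq hB hsep hu hv
  exact ⟨nonorthoGraphIso B T hT, nonorthoGraphIso_mk B T hT hu⟩

end LinearMap.BilinForm

theorem Matrix.dotProduct_sub_transpose_mulVec_self {n R : Type*} [Fintype n] [CommRing R]
    (A : Matrix n n R) (v : n → R) : v ⬝ᵥ (A - Aᵀ) *ᵥ v = 0 := by
  rw [sub_mulVec, dotProduct_sub, mulVec_transpose, dotProduct_comm v (v ᵥ* A),
    ← dotProduct_mulVec, sub_self]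

section Symplectic

variable {F : Type} [Field F] {ν : ℕ}

variable (F ν) in
def sKUpper : Matrix (Fin (2 * ν)) (Fin (2 * ν)) F :=
  of fun i j => if i.val % 2 = 0 ∧ j.val = i.val + 1 then 1 else 0

theorem sK_eq_sKUpper_sub_transpose : sK F ν = sKUpper F ν - (sKUpper F ν)ᵀ := by
  ext i j
  simp only [sK, sKUpper, of_apply, Matrix.sub_apply, transpose_apply]
  split_ifs <;> first | omega | simp

-- `j` is the index paired with `i` by the block `[[0,1],[-1,0]]` containing it.
theorem exists_vecMul_sK_apply_eq_or_eq_neg (v : Fin (2 * ν) → F) (i : Fin (2 * ν)) :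
    ∃ j, (v ᵥ* sK F ν) j = v i ∨ (v ᵥ* sK F ν) j = -v i := by
  have hi := i.isLt
  have vecMul_sK_apply (j : Fin (2 * ν))
      (hj : ∀ k : Fin (2 * ν), k.val ≠ i.val → sK F ν k j = 0) :
      (v ᵥ* sK F ν) j = v i * sK F ν i j := by
    rw [vecMul, dotProduct]
    exact Finset.sum_eq_single i (fun k _ hk => by rw [hj k (Fin.val_ne_of_ne hk), mul_zero])
      (by simp)
  rcases Nat.mod_two_eq_zero_or_one i.val with h | h
  · refine ⟨⟨i + 1, by omega⟩, .inl ?_⟩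
    rw [vecMul_sK_apply _ fun k hk => ?_]
    · simp [sK, h]
    · simp only [sK, of_apply]
      rw [if_neg (by omega), if_neg (by omega)]
  · refine ⟨⟨i - 1, by omega⟩, .inr ?_⟩
    rw [vecMul_sK_apply _ fun k hk => ?_]
    · simp only [sK, of_apply]
      rw [if_neg (by omega), if_pos (by omega), mul_neg_one]
    · simp only [sK, of_apply]
      rw [if_neg (by omega), if_neg (by omega)]

variable (F ν) in
def symplecticForm : LinearMap.BilinForm F (Fin (2 * ν) → F) := toLinearMap₂' F (sK F ν)

theorem symplecticForm_apply (u v : Fin (2 * ν) → F) :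
    symplecticForm F ν u v = u ⬝ᵥ sK F ν *ᵥ v :=
  toLinearMap₂'_apply' _ _ _

theorem symplecticForm_separatingLeft : (symplecticForm F ν).SeparatingLeft := by
  intro v hv
  ext i
  obtain ⟨j, hj⟩ := exists_vecMul_sK_apply_eq_or_eq_neg v i
  have : (v ᵥ* sK F ν) j = 0 := by
    rw [← hv (Pi.single j 1), symplecticForm_apply, dotProduct_mulVec, dotProduct_single_one]
  rcases hj with hj | hj <;> simpa [this, eq_comm] using hj

theorem symplecticForm_isAlt : (symplecticForm F ν).IsAlt := fun v => by
  rw [symplecticForm_apply, sK_eq_sKUpper_sub_transpose, dotProduct_sub_transpose_mulVec_self]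

theorem SpG_eq_nonorthoGraph : SpG F ν = (symplecticForm F ν).nonorthoGraph := by
  simp only [SpG, LinearMap.BilinForm.nonorthoGraph, symplecticForm_apply]

end Symplectic

theorem SpG_vertex_transitive_general (ν : ℕ) (F : Type) [Field F]
    (x y : Projectivization F (Fin (2 * ν) → F)) :
    ∃ g : SpG F ν ≃g SpG F ν, g x = y := by
  rw [SpG_eq_nonorthoGraph]
  exact LinearMap.BilinForm.nonorthoGraph_exists_iso_apply_eq symplecticForm_isAlt
    symplecticForm_separatingLeft x y

theorem SpG_vertex_transitive (q ν : ℕ) (F : Type) [Field F] [Fintype F]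
    (hF : Fintype.card F = q) (hν : 1 ≤ ν)
    (x y : Projectivization F (Fin (2 * ν) → F)) :
    ∃ g : SpG F ν ≃g SpG F ν, g x = y :=
  SpG_vertex_transitive_general ν F x y
end

section
/- Let q > 2, let e_1, f_1, …, e_ν, f_ν denote the standard basis vectors of F_q^{(2ν)} (in this order), and let E be the subgroup of Aut(Sp(2ν,q)) consisting of those automorphisms σ with σ([e_i]) = [e_i] and σ([f_i]) = [f_i] for i = 1, …, ν. Regarding the group of automorphisms of the form [α] ↦ [αT] with T a symplectic matrix (a copy of PSp_{2ν}(F_q)) as a subgroup of Aut(Sp(2ν,q)), every automorphism of Sp(2ν,q) is a product of an element of this subgroup and an element of E, i.e., Aut(Sp(2ν,q)) = PSp_{2ν}(F_q) · E. -/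
open Matrix

theorem vecMul_unit_ne_zero {n : Type} [Fintype n] [DecidableEq n] {F : Type} [Field F]
    {T : Matrix n n F} (hT : IsUnit T) {v : n → F} (hv : v ≠ 0) :
    v ᵥ* T ≠ 0 := by
  intro h
  apply hv
  have h2 := congrArg (fun w => w ᵥ* ((hT.unit⁻¹ : (Matrix n n F)ˣ) : Matrix n n F)) h
  simp only [Matrix.vecMul_vecMul, Matrix.zero_vecMul] at h2
  rw [IsUnit.mul_val_inv, Matrix.vecMul_one] at h2
  exact h2

/-- The standard basis vector `e_i` of `F^(2ν)`. -/
def eVec (F : Type) [Field F] (ν : ℕ) (i : Fin ν) : Fin (2 * ν) → F :=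
  Pi.single ⟨2 * i.val, by have := i.isLt; omega⟩ 1

/-- The standard basis vector `f_i` of `F^(2ν)`. -/
def fVec (F : Type) [Field F] (ν : ℕ) (i : Fin ν) : Fin (2 * ν) → F :=
  Pi.single ⟨2 * i.val + 1, by have := i.isLt; omega⟩ 1

theorem eVec_ne_zero (F : Type) [Field F] (ν : ℕ) (i : Fin ν) : eVec F ν i ≠ 0 := by
  intro h
  have := congrFun h ⟨2 * i.val, by have := i.isLt; omega⟩
  simp [eVec, Pi.single_eq_same] at this

theorem fVec_ne_zero (F : Type) [Field F] (ν : ℕ) (i : Fin ν) : fVec F ν i ≠ 0 := by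
  intro h
  have := congrFun h ⟨2 * i.val + 1, by have := i.isLt; omega⟩
  simp [fVec, Pi.single_eq_same] at this

/-- The vertex `[e_i]` of `Sp(2ν,q)`. -/
def eP (F : Type) [Field F] (ν : ℕ) (i : Fin ν) : Projectivization F (Fin (2 * ν) → F) :=
  Projectivization.mk F (eVec F ν i) (eVec_ne_zero F ν i)

/-- The vertex `[f_i]` of `Sp(2ν,q)`. -/
def fP (F : Type) [Field F] (ν : ℕ) (i : Fin ν) : Projectivization F (Fin (2 * ν) → F) :=
  Projectivization.mk F (fVec F ν i) (fVec_ne_zero F ν i)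

/-!
An automorphism `τ` of `Sp(2ν, q)` preserves non-adjacency, i.e. orthogonality for the
symplectic form `B(u, v) = u K vᵀ`. So if `a_i`, `b_i` represent `τ[e_i]`, `τ[f_i]`, then all
pairings among them vanish except `c_i = B(a_i, b_i) ≠ 0`, and `a_1, c_1⁻¹ b_1, …, a_ν, c_ν⁻¹ b_ν`
is a symplectic basis. The matrix `T` with these rows is symplectic and `σ_T` agrees with `τ` on
every `[e_i]` and `[f_i]`, so `σ_T⁻¹ ∘ τ` lies in `E`.
-/

section

variable {F : Type} [Field F] {ν : ℕ}

def pairEquiv (ν : ℕ) : Fin ν × Fin 2 ≃ Fin (2 * ν) :=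
  finProdFinEquiv.trans (finCongr (mul_comm ν 2))

@[simp]
lemma pairEquiv_apply_val (p : Fin ν × Fin 2) : (pairEquiv ν p : ℕ) = 2 * p.1 + p.2 := by
  simp [pairEquiv, add_comm]

lemma sK_pairEquiv (i j : Fin ν) (t u : Fin 2) :
    sK F ν (pairEquiv ν (i, t)) (pairEquiv ν (j, u)) =
      if i = j then !![0, 1; -1, 0] t u else 0 := by
  simp only [sK, Matrix.of_apply, pairEquiv_apply_val, Fin.ext_iff]
  fin_cases t <;> fin_cases u <;> simp <;> split_ifs <;> first | rfl | omega

lemma sK_mulVec_pairEquiv (v : Fin (2 * ν) → F) (i : Fin ν) (t : Fin 2) :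
    (sK F ν *ᵥ v) (pairEquiv ν (i, t)) =
      !![0, 1; -1, 0] t 0 * v (pairEquiv ν (i, 0)) +
        !![0, 1; -1, 0] t 1 * v (pairEquiv ν (i, 1)) := by
  simp [Matrix.mulVec, dotProduct, ← (pairEquiv ν).sum_comp, Fintype.sum_prod_type, sK_pairEquiv,
    Fin.sum_univ_two]

lemma dotProduct_sK_mulVec (u v : Fin (2 * ν) → F) :
    u ⬝ᵥ (sK F ν *ᵥ v) = ∑ i, (u (pairEquiv ν (i, 0)) * v (pairEquiv ν (i, 1)) -
      u (pairEquiv ν (i, 1)) * v (pairEquiv ν (i, 0))) := by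
  simp [dotProduct, ← (pairEquiv ν).sum_comp, Fintype.sum_prod_type, Fin.sum_univ_two,
    sK_mulVec_pairEquiv, sub_eq_add_neg]

lemma dotProduct_sK_mulVec_self (u : Fin (2 * ν) → F) : u ⬝ᵥ (sK F ν *ᵥ u) = 0 := by
  simp [dotProduct_sK_mulVec, mul_comm]

lemma dotProduct_sK_mulVec_comm (u v : Fin (2 * ν) → F) :
    v ⬝ᵥ (sK F ν *ᵥ u) = -(u ⬝ᵥ (sK F ν *ᵥ v)) := by
  simp only [dotProduct_sK_mulVec, ← Finset.sum_neg_distrib]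
  exact Finset.sum_congr rfl fun i _ => by ring

lemma sK_mul_sK : sK F ν * sK F ν = -1 := by
  refine Matrix.toLin'.injective (LinearMap.ext fun v => funext fun r => ?_)
  obtain ⟨⟨i, t⟩, rfl⟩ := (pairEquiv ν).surjective r
  fin_cases t <;> simp [sK_mulVec_pairEquiv]

namespace SpG

lemma adj_iff (x y : Projectivization F (Fin (2 * ν) → F)) :
    (SpG F ν).Adj x y ↔ x.rep ⬝ᵥ (sK F ν *ᵥ y.rep) ≠ 0 := by
  rw [SpG, SimpleGraph.fromRel_adj, dotProduct_sK_mulVec_comm x.rep, neg_ne_zero, or_self,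
    and_iff_right_iff_imp]
  rintro h rfl
  exact h (dotProduct_sK_mulVec_self _)

lemma adj_mk_iff {u v : Fin (2 * ν) → F} (hu : u ≠ 0) (hv : v ≠ 0) :
    (SpG F ν).Adj (Projectivization.mk F u hu) (Projectivization.mk F v hv) ↔
      u ⬝ᵥ (sK F ν *ᵥ v) ≠ 0 := by
  obtain ⟨a, ha⟩ := Projectivization.exists_smul_eq_mk_rep F u hu
  obtain ⟨b, hb⟩ := Projectivization.exists_smul_eq_mk_rep F v hv
  rw [adj_iff, ← ha, ← hb]
  simp [Units.smul_def, Matrix.mulVec_smul, smul_eq_mul]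

lemma dotProduct_sK_mulVec_rep_iso_eq_zero_iff (τ : SpG F ν ≃g SpG F ν)
    (x y : Projectivization F (Fin (2 * ν) → F)) :
    (τ x).rep ⬝ᵥ (sK F ν *ᵥ (τ y).rep) = 0 ↔ x.rep ⬝ᵥ (sK F ν *ᵥ y.rep) = 0 := by
  simpa only [adj_iff, not_not] using τ.map_adj_iff.not

def isoOfLinearEquiv (g : (Fin (2 * ν) → F) ≃ₗ[F] (Fin (2 * ν) → F))
    (hg : ∀ u v, g u ⬝ᵥ (sK F ν *ᵥ g v) = u ⬝ᵥ (sK F ν *ᵥ v)) : SpG F ν ≃g SpG F ν where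
  toEquiv := MulAction.toPerm g
  map_rel_iff' {x y} := by
    induction x using Projectivization.ind with | h u hu =>
    induction y using Projectivization.ind with | h v hv =>
    simp only [MulAction.toPerm_apply, Projectivization.smul_mk, adj_mk_iff]
    exact (hg u v).symm ▸ Iff.rfl

end SpG

noncomputable def vecMulLinearEquiv {n : Type} [Fintype n] [DecidableEq n] (T : Matrix n n F)
    (hT : IsUnit T) : (n → F) ≃ₗ[F] (n → F) :=
  LinearEquiv.ofBijective T.vecMulLinear
    ⟨Matrix.vecMul_injective_iff_isUnit.mpr hT, Matrix.vecMul_surjective_iff_isUnit.mpr hT⟩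

lemma dotProduct_sK_mulVec_vecMul {T : Matrix (Fin (2 * ν)) (Fin (2 * ν)) F}
    (hT : T * sK F ν * Tᵀ = sK F ν) (u v : Fin (2 * ν) → F) :
    (u ᵥ* T) ⬝ᵥ (sK F ν *ᵥ (v ᵥ* T)) = u ⬝ᵥ (sK F ν *ᵥ v) := by
  rw [← Matrix.mulVec_transpose T v, Matrix.mulVec_mulVec, Matrix.dotProduct_mulVec,
    Matrix.vecMul_vecMul, ← Matrix.mul_assoc, hT, ← Matrix.dotProduct_mulVec]

lemma isUnit_of_mul_sK_mul_transpose {T : Matrix (Fin (2 * ν)) (Fin (2 * ν)) F}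
    (hT : T * sK F ν * Tᵀ = sK F ν) : IsUnit T := by
  refine (Matrix.isUnit_iff_isUnit_det T).mpr
    (Matrix.isUnit_det_of_right_inverse (B := sK F ν * Tᵀ * -sK F ν) ?_)
  rw [← Matrix.mul_assoc, ← Matrix.mul_assoc, hT, Matrix.mul_neg, sK_mul_sK, neg_neg]

lemma mul_mul_transpose_apply {n R : Type} [Fintype n] [CommSemiring R] (T M : Matrix n n R)
    (r s : n) :
    (T * M * Tᵀ) r s = T r ⬝ᵥ (M *ᵥ T s) := by
  rw [Matrix.dotProduct_mulVec, Matrix.mul_apply]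
  simp [Matrix.vecMul, dotProduct, Matrix.mul_apply, Finset.sum_mul]

noncomputable def symplecticIso (T : Matrix (Fin (2 * ν)) (Fin (2 * ν)) F) (hT : IsUnit T)
    (hsymp : T * sK F ν * Tᵀ = sK F ν) : SpG F ν ≃g SpG F ν :=
  SpG.isoOfLinearEquiv (vecMulLinearEquiv T hT) (dotProduct_sK_mulVec_vecMul hsymp)

lemma symplecticIso_mk (T : Matrix (Fin (2 * ν)) (Fin (2 * ν)) F) (hT : IsUnit T)
    (hsymp : T * sK F ν * Tᵀ = sK F ν) {v : Fin (2 * ν) → F} (hv : v ≠ 0) :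
    symplecticIso T hT hsymp (Projectivization.mk F v hv) =
      Projectivization.mk F (v ᵥ* T) (vecMul_unit_ne_zero hT hv) :=
  rfl

lemma symplecticIso_apply (T : Matrix (Fin (2 * ν)) (Fin (2 * ν)) F) (hT : IsUnit T)
    (hsymp : T * sK F ν * Tᵀ = sK F ν) (x : Projectivization F (Fin (2 * ν) → F)) :
    symplecticIso T hT hsymp x =
      Projectivization.mk F (x.rep ᵥ* T) (vecMul_unit_ne_zero hT x.rep_nonzero) := by
  conv_lhs => rw [← x.mk_rep]
  rfl

def basisPt (r : Fin (2 * ν)) : Projectivization F (Fin (2 * ν) → F) :=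
  Projectivization.mk F (Pi.single r 1) (by simp)

lemma eP_eq_basisPt (i : Fin ν) : eP F ν i = basisPt (pairEquiv ν (i, 0)) := by
  unfold eP eVec basisPt
  congr 2
  exact Fin.ext (by simp)

lemma fP_eq_basisPt (i : Fin ν) : fP F ν i = basisPt (pairEquiv ν (i, 1)) := by
  unfold fP fVec basisPt
  congr 2
  exact Fin.ext (by simp)

lemma dotProduct_sK_mulVec_basisPt_rep_eq_zero_iff (r s : Fin (2 * ν)) :
    (basisPt (F := F) r).rep ⬝ᵥ (sK F ν *ᵥ (basisPt s).rep) = 0 ↔ sK F ν r s = 0 := by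
  simpa [Matrix.mulVec_single_one] using
    ((SpG.adj_iff (basisPt (F := F) r) (basisPt s)).symm.trans (SpG.adj_mk_iff _ _)).not

section Normalize

variable (w : Fin ν × Fin 2 → Fin (2 * ν) → F)

def normalizeHyperbolicPairs (p : Fin ν × Fin 2) : Fin (2 * ν) → F :=
  ![1, (w (p.1, 0) ⬝ᵥ (sK F ν *ᵥ w (p.1, 1)))⁻¹] p.2 • w p

variable {w}

lemma dotProduct_sK_mulVec_hyperbolic_ne_zero
    (hw : ∀ p q, w p ⬝ᵥ (sK F ν *ᵥ w q) = 0 ↔ sK F ν (pairEquiv ν p) (pairEquiv ν q) = 0)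
    (i : Fin ν) : w (i, 0) ⬝ᵥ (sK F ν *ᵥ w (i, 1)) ≠ 0 := by
  simp [hw, sK_pairEquiv]

lemma dotProduct_sK_mulVec_normalizeHyperbolicPairs
    (hw : ∀ p q, w p ⬝ᵥ (sK F ν *ᵥ w q) = 0 ↔ sK F ν (pairEquiv ν p) (pairEquiv ν q) = 0)
    (p q : Fin ν × Fin 2) :
    normalizeHyperbolicPairs w p ⬝ᵥ (sK F ν *ᵥ normalizeHyperbolicPairs w q) =
      sK F ν (pairEquiv ν p) (pairEquiv ν q) := by
  obtain ⟨i, t⟩ := p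
  obtain ⟨j, u⟩ := q
  by_cases hij : i = j
  · subst hij
    have hc := dotProduct_sK_mulVec_hyperbolic_ne_zero hw i
    have hcomm := dotProduct_sK_mulVec_comm (w (i, 0)) (w (i, 1))
    fin_cases t <;> fin_cases u
    · simp [normalizeHyperbolicPairs, sK_pairEquiv, dotProduct_sK_mulVec_self]
    · simp [normalizeHyperbolicPairs, sK_pairEquiv, Matrix.mulVec_smul, hc]
    · simp [normalizeHyperbolicPairs, sK_pairEquiv, hc, hcomm]
    · simp [normalizeHyperbolicPairs, sK_pairEquiv, mulVec_smul, dotProduct_sK_mulVec_self]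
  · have h0 := (hw (i, t) (j, u)).mpr (by simp [sK_pairEquiv, hij])
    simp [normalizeHyperbolicPairs, Matrix.mulVec_smul, h0, sK_pairEquiv, hij]

end Normalize

lemma exists_symplecticIso_eq_on_basisPt (τ : SpG F ν ≃g SpG F ν) :
    ∃ (T : Matrix (Fin (2 * ν)) (Fin (2 * ν)) F) (hT : IsUnit T)
      (hsymp : T * sK F ν * Tᵀ = sK F ν),
        ∀ r, symplecticIso T hT hsymp (basisPt r) = τ (basisPt r) := by
  let w : Fin ν × Fin 2 → Fin (2 * ν) → F := fun p => (τ (basisPt (pairEquiv ν p))).rep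
  have hw (p q : Fin ν × Fin 2) :
      w p ⬝ᵥ (sK F ν *ᵥ w q) = 0 ↔ sK F ν (pairEquiv ν p) (pairEquiv ν q) = 0 :=
    (SpG.dotProduct_sK_mulVec_rep_iso_eq_zero_iff τ _ _).trans
      (dotProduct_sK_mulVec_basisPt_rep_eq_zero_iff _ _)
  let T : Matrix (Fin (2 * ν)) (Fin (2 * ν)) F :=
    Matrix.of fun r => normalizeHyperbolicPairs w ((pairEquiv ν).symm r)
  have hT_row (p) : T (pairEquiv ν p) = normalizeHyperbolicPairs w p :=
    congrArg (normalizeHyperbolicPairs w) ((pairEquiv ν).symm_apply_apply p)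
  have hsymp : T * sK F ν * Tᵀ = sK F ν := by
    ext r s
    obtain ⟨p, rfl⟩ := (pairEquiv ν).surjective r
    obtain ⟨q, rfl⟩ := (pairEquiv ν).surjective s
    rw [mul_mul_transpose_apply, hT_row, hT_row, dotProduct_sK_mulVec_normalizeHyperbolicPairs hw]
  have hTu := isUnit_of_mul_sK_mul_transpose hsymp
  refine ⟨T, hTu, hsymp, fun r => ?_⟩
  obtain ⟨p, rfl⟩ := (pairEquiv ν).surjective r
  have hrow : Pi.single (pairEquiv ν p) 1 ᵥ* T = normalizeHyperbolicPairs w p := by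
    rw [Matrix.single_one_vecMul, Matrix.row_apply', hT_row]
  have hn : normalizeHyperbolicPairs w p ≠ 0 := by
    rw [← hrow]
    exact vecMul_unit_ne_zero hTu (by simp)
  calc symplecticIso T hTu hsymp (basisPt (pairEquiv ν p))
      = Projectivization.mk F (normalizeHyperbolicPairs w p) hn := by
        rw [basisPt, symplecticIso_mk]
        congr 1
    _ = Projectivization.mk F (w p) (Projectivization.rep_nonzero _) :=
        (Projectivization.mk_eq_mk_iff' F _ _ hn _).mpr ⟨_, rfl⟩
    _ = τ (basisPt (pairEquiv ν p)) := Projectivization.mk_rep _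

end

theorem aut_SpG_eq_PSp_mul_E_general (ν : ℕ) (F : Type) [Field F]
    (τ : SpG F ν ≃g SpG F ν) :
    ∃ σ e : SpG F ν ≃g SpG F ν,
      (∃ (T : Matrix (Fin (2 * ν)) (Fin (2 * ν)) F) (hT : IsUnit T),
        T * sK F ν * Tᵀ = sK F ν ∧
        ∀ x : Projectivization F (Fin (2 * ν) → F),
          σ x = Projectivization.mk F (x.rep ᵥ* T)
            (vecMul_unit_ne_zero hT x.rep_nonzero)) ∧
      (∀ i : Fin ν, e (eP F ν i) = eP F ν i ∧ e (fP F ν i) = fP F ν i) ∧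
      (∀ x : Projectivization F (Fin (2 * ν) → F), τ x = σ (e x)) := by
  obtain ⟨T, hT, hsymp, hτ⟩ := exists_symplecticIso_eq_on_basisPt τ
  set σ := symplecticIso T hT hsymp
  refine ⟨σ, τ.trans σ.symm, ⟨T, hT, hsymp, symplecticIso_apply T hT hsymp⟩, fun i => ?_,
    fun x => (σ.apply_symm_apply (τ x)).symm⟩
  simp only [RelIso.trans_apply, RelIso.symm_apply_eq, eP_eq_basisPt, fP_eq_basisPt, σ, hτ,
    and_self]

/-- `Aut(Sp(2ν,q)) = PSp_{2ν}(F_q) · E`: every automorphism `τ` factors as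
`τ = σ ∘ e` where `σ` is induced by a symplectic matrix and `e` fixes all the
vertices `[e_i]` and `[f_i]`. -/
theorem aut_SpG_eq_PSp_mul_E (q ν : ℕ) (F : Type) [Field F] [Fintype F]
    (hF : Fintype.card F = q) (hq : 2 < q) (hν : 1 ≤ ν)
    (τ : SpG F ν ≃g SpG F ν) :
    ∃ σ e : SpG F ν ≃g SpG F ν,
      (∃ (T : Matrix (Fin (2 * ν)) (Fin (2 * ν)) F) (hT : IsUnit T),
        T * sK F ν * Tᵀ = sK F ν ∧
        ∀ x : Projectivization F (Fin (2 * ν) → F),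
          σ x = Projectivization.mk F (x.rep ᵥ* T)
            (vecMul_unit_ne_zero hT x.rep_nonzero)) ∧
      (∀ i : Fin ν, e (eP F ν i) = eP F ν i ∧ e (fP F ν i) = fP F ν i) ∧
      (∀ x : Projectivization F (Fin (2 * ν) → F), τ x = σ (e x)) :=
  aut_SpG_eq_PSp_mul_E_general ν F τ
end
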